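/- (Invariance of the sublevel set.) Let E : [0,∞) → ℝ be C¹, let F : ℝ → ℝ be continuous and nondecreasing, and suppose E'(t) ≤ 0 whenever F(E(t)) < 0, and F(E(0)) < 0. Then F(E(t)) < 0 and E(t) ≤ E(0) for all t ≥ 0. -/
import Mathlib


/-- Invariance of the sublevel set: if `F` is continuous and nondecreasing,
`F(E(0)) < 0`, and `E'(t) ≤ 0` whenever `F(E(t)) < 0`, then `F(E(t)) < 0` and
`E(t) ≤ E(0)` for all `t ≥ 0`. -/
theorem sublevel_invariance
    (E E' : ℝ → ℝ) (F : ℝ → ℝ)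
    (hE : ∀ t ≥ (0:ℝ), HasDerivAt E (E' t) t)
    (hE'c : ContinuousOn E' (Set.Ici 0))
    (hF : Continuous F) (hFmono : Monotone F)
    (h0 : F (E 0) < 0)
    (hdecr : ∀ t ≥ (0:ℝ), F (E t) < 0 → E' t ≤ 0) :
    ∀ t ≥ (0:ℝ), F (E t) < 0 ∧ E t ≤ E 0 := by
  have hEc : ∀ t ≥ (0:ℝ), ContinuousAt E t := fun t ht => (hE t ht).continuousAt
  have main : ∀ T ≥ (0:ℝ), ∀ t ∈ Set.Icc (0:ℝ) T, E t ≤ E 0 := by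
    intro T hT
    set s : Set ℝ := {t | ∀ u ∈ Set.Icc (0:ℝ) t, E u ≤ E 0} with hs_def
    have hsub : s ∩ Set.Icc 0 T ⊆ Set.Icc 0 T ∩ E ⁻¹' Set.Iic (E 0) := by
      rintro x ⟨hx, hx0, hxT⟩
      exact ⟨⟨hx0, hxT⟩, hx x ⟨hx0, le_refl x⟩⟩
    have hEcont : ContinuousOn E (Set.Icc 0 T) := fun u hu =>
      (hEc u hu.1).continuousWithinAt
    have hclosed2 : IsClosed (Set.Icc 0 T ∩ E ⁻¹' Set.Iic (E 0)) :=
      hEcont.preimage_isClosed_of_isClosed isClosed_Icc isClosed_Iic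
    have hclosed : IsClosed (s ∩ Set.Icc 0 T) := by
      apply isClosed_of_closure_subset
      intro t ht
      have htIcc : t ∈ Set.Icc (0:ℝ) T := by
        have := closure_mono (Set.inter_subset_right (s := s)) ht
        rwa [isClosed_Icc.closure_eq] at this
      refine ⟨?_, htIcc⟩
      intro u ⟨hu0, hut⟩
      rcases lt_or_eq_of_le hut with hlt | heq
      · -- u < t : find a point of s above u
        rcases mem_closure_iff.1 ht (Set.Ioi u) isOpen_Ioi hlt with ⟨x, hxu, hxs, _⟩
        exact hxs u ⟨hu0, le_of_lt hxu⟩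
      · -- u = t : use closedness of the sublevel set
        subst heq
        have := closure_mono hsub ht
        rw [hclosed2.closure_eq] at this
        exact this.2
    have h0s : (0:ℝ) ∈ s := by
      intro u hu
      have : u = 0 := le_antisymm hu.2 hu.1
      simp [this]
    have hgt : ∀ x ∈ s ∩ Set.Ico 0 T, ∀ y ∈ Set.Ioi x, (s ∩ Set.Ioc x y).Nonempty := by
      rintro x ⟨hxs, hx0, hxT⟩ y hy
      have hEx : E x ≤ E 0 := hxs x ⟨hx0, le_refl x⟩
      have hFx : F (E x) < 0 := lt_of_le_of_lt (hFmono hEx) h0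
      have hcont : ContinuousAt (fun u => F (E u)) x :=
        hF.continuousAt.comp (hEc x hx0)
      have hnhds : {u : ℝ | F (E u) < 0} ∈ nhds x :=
        hcont.preimage_mem_nhds (Iio_mem_nhds hFx)
      rcases Metric.mem_nhds_iff.1 hnhds with ⟨δ, hδ, hball⟩
      set z : ℝ := min (min (x + δ/2) T) y with hz_def
      have hxz : x < z := by
        apply lt_min (lt_min (by linarith) hxT) hy
      have hzy : z ≤ y := min_le_right _ _
      have hzT : z ≤ T := le_trans (min_le_left _ _) (min_le_right _ _)
      have hzδ : z ≤ x + δ/2 := le_trans (min_le_left _ _) (min_le_left _ _)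
      have hanti : AntitoneOn E (Set.Icc x z) := by
        apply antitoneOn_of_hasDerivWithinAt_nonpos (f' := E') (convex_Icc x z)
        · intro u hu
          exact (hEc u (le_trans hx0 hu.1)).continuousWithinAt
        · intro u hu
          rw [interior_Icc] at hu
          exact (hE u (le_trans hx0 (le_of_lt hu.1))).hasDerivWithinAt
        · intro u hu
          rw [interior_Icc] at hu
          have hu0 : (0:ℝ) ≤ u := le_trans hx0 (le_of_lt hu.1)
          have hFEu : F (E u) < 0 := by
            apply hball
            rw [Metric.mem_ball, Real.dist_eq, abs_of_nonneg (by linarith [hu.1])]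
            have : u < z := hu.2
            linarith
          exact hdecr u hu0 hFEu
      refine ⟨z, ?_, hxz, hzy⟩
      intro u ⟨hu0, huz⟩
      rcases le_or_gt u x with hux | hxu
      · exact hxs u ⟨hu0, hux⟩
      · calc E u ≤ E x := hanti ⟨le_refl x, le_of_lt hxz⟩ ⟨le_of_lt hxu, huz⟩
              (le_of_lt hxu)
          _ ≤ E 0 := hEx
    have hIcc : Set.Icc (0:ℝ) T ⊆ s :=
      hclosed.Icc_subset_of_forall_exists_gt h0s hgt
    intro t ht
    exact hIcc ht t ⟨ht.1, le_refl t⟩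
  intro t ht
  have hle : E t ≤ E 0 := main t ht t ⟨ht, le_refl t⟩
  exact ⟨lt_of_le_of_lt (hFmono hle) h0, hle⟩
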